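/- For every real number x, the exponential generating function of the type B Bell numbers satisfies Σ_{n≥0} B(n) · x^n / n! = exp(e^(2x)/2 + x - 1/2), where the series on the left converges. -/

import Mathlib

/-- The classical Stirling numbers of the second kind, defined by the recurrence
`S(n,k) = S(n-1,k-1) + k·S(n-1,k)` with `S(0,k) = δ_{0,k}`. -/
def stirling2 : ℕ → ℕ → ℕ
  | 0, 0 => 1
  | 0, _ + 1 => 0
  | _ + 1, 0 => 0
  | n + 1, k + 1 => stirling2 n k + (k + 1) * stirling2 n (k + 1)

/-- The type `B` Stirling numbers of the second kind, defined by the recurrence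
`S_B(n,k) = S_B(n-1,k-1) + (2k+1)·S_B(n-1,k)` with `S_B(0,k) = δ_{0,k}`. -/
def stirlingB : ℕ → ℕ → ℕ
  | 0, 0 => 1
  | 0, _ + 1 => 0
  | n + 1, 0 => stirlingB n 0
  | n + 1, k + 1 => stirlingB n k + (2 * (k + 1) + 1) * stirlingB n (k + 1)

/-- The type `B` Bell numbers: `B(n) = Σ_{k=0}^{n} S_B(n,k)`. -/
def bellB (n : ℕ) : ℕ := ∑ k ∈ Finset.range (n + 1), stirlingB n k


lemma bellB_def (n : ℕ) : bellB n = ∑ k ∈ Finset.range (n + 1), stirlingB n k := rfl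

lemma stirlingB_eq_zero : ∀ {n k : ℕ}, n < k → stirlingB n k = 0
  | 0, _ + 1, _ => rfl
  | n + 1, k + 1, h => by
      have h1 : n < k := Nat.lt_of_succ_lt_succ h
      have h2 : n < k + 1 := Nat.lt_of_lt_of_le h1 (Nat.le_succ k)
      show stirlingB n k + (2 * (k + 1) + 1) * stirlingB n (k + 1) = 0
      rw [stirlingB_eq_zero h1, stirlingB_eq_zero h2]
      simp

lemma df_step (j k : ℕ) :
    2 ^ k * j.descFactorial k * (2 * j + 1)
      = 2 ^ (k + 1) * j.descFactorial (k + 1) + (2 * k + 1) * (2 ^ k * j.descFactorial k) := by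
  rcases le_or_gt k j with h | h
  · obtain ⟨m, rfl⟩ := Nat.exists_eq_add_of_le h
    rw [Nat.descFactorial_succ, Nat.add_sub_cancel_left]
    ring
  · rw [Nat.descFactorial_of_lt h, Nat.descFactorial_of_lt (h.trans (Nat.lt_succ_self k))]
    simp

lemma stirlingB_key (n j : ℕ) :
    (2 * j + 1) ^ n
      = ∑ k ∈ Finset.range (n + 1), stirlingB n k * (2 ^ k * j.descFactorial k) := by
  induction n with
  | zero => simp [stirlingB]
  | succ n ih =>
    have step1 : (2 * j + 1) ^ (n + 1)
        = (∑ k ∈ Finset.range (n + 1),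
            stirlingB n k * (2 ^ (k + 1) * j.descFactorial (k + 1)))
          + ∑ k ∈ Finset.range (n + 1),
              (2 * k + 1) * (stirlingB n k * (2 ^ k * j.descFactorial k)) := by
      rw [pow_succ, ih, Finset.sum_mul, ← Finset.sum_add_distrib]
      refine Finset.sum_congr rfl fun k _ => ?_
      calc stirlingB n k * (2 ^ k * j.descFactorial k) * (2 * j + 1)
          = stirlingB n k * (2 ^ k * j.descFactorial k * (2 * j + 1)) := by ring
        _ = stirlingB n k * (2 ^ (k + 1) * j.descFactorial (k + 1)
              + (2 * k + 1) * (2 ^ k * j.descFactorial k)) := by rw [df_step]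
        _ = _ := by ring
    rw [step1]
    -- reindex the RHS
    rw [Finset.sum_range_succ' (fun k => stirlingB (n + 1) k * (2 ^ k * j.descFactorial k)) (n + 1)]
    have expand : ∀ k, stirlingB (n + 1) (k + 1) * (2 ^ (k + 1) * j.descFactorial (k + 1))
        = stirlingB n k * (2 ^ (k + 1) * j.descFactorial (k + 1))
          + (2 * (k + 1) + 1) * (stirlingB n (k + 1) * (2 ^ (k + 1) * j.descFactorial (k + 1))) := by
      intro k
      show (stirlingB n k + (2 * (k + 1) + 1) * stirlingB n (k + 1)) * _ = _
      ring
    simp only [expand, Finset.sum_add_distrib]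
    -- now: A + B = A + C + (S(n+1,0) * (2^0 * df 0))
    have hB : ∑ k ∈ Finset.range (n + 1), (2 * k + 1) * (stirlingB n k * (2 ^ k * j.descFactorial k))
        = (∑ k ∈ Finset.range (n + 1),
            (2 * (k + 1) + 1) * (stirlingB n (k + 1) * (2 ^ (k + 1) * j.descFactorial (k + 1))))
          + stirlingB (n + 1) 0 * (2 ^ 0 * j.descFactorial 0) := by
      rw [Finset.sum_range_succ' (fun k => (2 * k + 1) * (stirlingB n k * (2 ^ k * j.descFactorial k))) n]
      rw [Finset.sum_range_succ (fun k => (2 * (k + 1) + 1) * (stirlingB n (k + 1) * (2 ^ (k + 1) * j.descFactorial (k + 1)))) n]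
      rw [stirlingB_eq_zero (Nat.lt_succ_self n)]
      show _ + (2 * 0 + 1) * (stirlingB n 0 * (2 ^ 0 * j.descFactorial 0)) = _
      have h0 : stirlingB (n + 1) 0 = stirlingB n 0 := rfl
      rw [h0]
      simp
    rw [hB]
    ring

lemma hasSum_exp_div (y : ℝ) : HasSum (fun n : ℕ => y ^ n / n.factorial) (Real.exp y) := by
  have h := NormedSpace.exp_series_hasSum_exp' (𝕂 := ℝ) y
  rw [Real.exp_eq_exp_ℝ]
  simpa [div_eq_inv_mul] using h

lemma hasSum_col (k : ℕ) :
    HasSum (fun j : ℕ => (2 : ℝ) ^ k * (j.descFactorial k) / (2 ^ j * j.factorial))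
      (Real.exp (1 / 2)) := by
  have hinj : Function.Injective (fun m : ℕ => m + k) := add_left_injective k
  rw [← hinj.hasSum_iff (f := fun j : ℕ => (2 : ℝ) ^ k * (j.descFactorial k) / (2 ^ j * j.factorial)) ?_]
  · have key : ∀ m : ℕ, (2 : ℝ) ^ k * ((m + k).descFactorial k) / (2 ^ (m + k) * (m + k).factorial)
        = (1 / 2 : ℝ) ^ m / m.factorial := by
      intro m
      have h1 : m.factorial * ((m + k).descFactorial k) = (m + k).factorial := by
        have := Nat.factorial_mul_descFactorial (n := m + k) (k := k) (by omega)
        simpa using this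
      have h2 : ((m + k).factorial : ℝ) = (m.factorial : ℝ) * ((m + k).descFactorial k : ℝ) := by
        exact_mod_cast h1.symm
      have hD : ((m + k).descFactorial k : ℝ) ≠ 0 := by
        have : (m + k).descFactorial k ≠ 0 := by
          rw [Ne, Nat.descFactorial_eq_zero_iff_lt]; omega
        exact_mod_cast this
      rw [h2, pow_add]
      have hm : (m.factorial : ℝ) ≠ 0 := by exact_mod_cast m.factorial_ne_zero
      field_simp
      ring
      rw [← mul_pow]; norm_num
    have hfun : ((fun j : ℕ => (2 : ℝ) ^ k * (j.descFactorial k) / (2 ^ j * j.factorial))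
        ∘ fun m : ℕ => m + k) = fun m : ℕ => (1 / 2 : ℝ) ^ m / m.factorial := funext key
    rw [hfun]
    exact hasSum_exp_div (1 / 2 : ℝ)
  · intro j hj
    have hjk : j < k := by
      by_contra h
      exact hj ⟨j - k, show j - k + k = j by omega⟩
    simp [Nat.descFactorial_of_lt hjk]

lemma hasSum_row (n : ℕ) :
    HasSum (fun j : ℕ => ((2 * j + 1 : ℕ) : ℝ) ^ n / (2 ^ j * j.factorial))
      (Real.exp (1 / 2) * (bellB n : ℝ)) := by
  have hpt : ∀ j : ℕ, ((2 * j + 1 : ℕ) : ℝ) ^ n / (2 ^ j * j.factorial)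
      = ∑ k ∈ Finset.range (n + 1),
          (stirlingB n k : ℝ) * ((2 : ℝ) ^ k * (j.descFactorial k) / (2 ^ j * j.factorial)) := by
    intro j
    have hnum : ((2 * j + 1 : ℕ) : ℝ) ^ n
        = ∑ k ∈ Finset.range (n + 1),
            (stirlingB n k : ℝ) * ((2 : ℝ) ^ k * (j.descFactorial k : ℝ)) := by
      calc ((2 * j + 1 : ℕ) : ℝ) ^ n = (((2 * j + 1) ^ n : ℕ) : ℝ) := by push_cast; ring
        _ = _ := by
            rw [stirlingB_key n j]
            push_cast
            exact Finset.sum_congr rfl fun k _ => by ring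
    rw [hnum, Finset.sum_div]
    refine Finset.sum_congr rfl fun k _ => ?_
    ring
  have hsum : HasSum (fun j : ℕ => ∑ k ∈ Finset.range (n + 1),
      (stirlingB n k : ℝ) * ((2 : ℝ) ^ k * (j.descFactorial k) / (2 ^ j * j.factorial)))
      (∑ k ∈ Finset.range (n + 1), (stirlingB n k : ℝ) * Real.exp (1 / 2)) :=
    hasSum_sum fun k _ => (hasSum_col k).mul_left _
  have : (∑ k ∈ Finset.range (n + 1), (stirlingB n k : ℝ) * Real.exp (1 / 2))
      = Real.exp (1 / 2) * (bellB n : ℝ) := by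
    rw [← Finset.sum_mul, bellB_def]
    push_cast
    ring
  rw [← this, funext hpt]
  exact hsum

/-- `Σ_{n≥0} B(n)·x^n/n! = exp(e^(2x)/2 + x - 1/2)`, the series converging. -/
theorem bellB_egf (x : ℝ) :
    Summable (fun n : ℕ => (bellB n : ℝ) * x ^ n / (n.factorial : ℝ)) ∧
    ∑' n : ℕ, (bellB n : ℝ) * x ^ n / (n.factorial : ℝ)
      = Real.exp (Real.exp (2 * x) / 2 + x - 1 / 2) := by
  set g : ℕ × ℕ → ℝ := fun p =>
    (((2 * p.1 + 1 : ℕ) : ℝ) * x) ^ p.2 / (2 ^ p.1 * p.1.factorial * p.2.factorial) with hg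
  have fib : ∀ (y : ℝ) (j : ℕ),
      HasSum (fun n : ℕ => (((2 * j + 1 : ℕ) : ℝ) * y) ^ n / (2 ^ j * j.factorial * n.factorial))
        (Real.exp (((2 * j + 1 : ℕ) : ℝ) * y) / (2 ^ j * j.factorial)) := by
    intro y j
    have h := (hasSum_exp_div (((2 * j + 1 : ℕ) : ℝ) * y)).div_const ((2 : ℝ) ^ j * j.factorial)
    have heq : (fun n : ℕ => ((((2 * j + 1 : ℕ) : ℝ) * y) ^ n / n.factorial) / (2 ^ j * j.factorial))
        = fun n : ℕ => (((2 * j + 1 : ℕ) : ℝ) * y) ^ n / (2 ^ j * j.factorial * n.factorial) := by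
      funext n; rw [div_div]; ring_nf
    rwa [heq] at h
  have expcol : ∀ y : ℝ,
      HasSum (fun j : ℕ => Real.exp (((2 * j + 1 : ℕ) : ℝ) * y) / (2 ^ j * j.factorial))
        (Real.exp y * Real.exp (Real.exp (2 * y) / 2)) := by
    intro y
    have h := (hasSum_exp_div (Real.exp (2 * y) / 2)).mul_left (Real.exp y)
    have key : (fun j : ℕ => Real.exp y * ((Real.exp (2 * y) / 2) ^ j / j.factorial))
        = fun j : ℕ => Real.exp (((2 * j + 1 : ℕ) : ℝ) * y) / (2 ^ j * j.factorial) := by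
      funext j
      have h1 : ((2 * j + 1 : ℕ) : ℝ) * y = (j : ℕ) * (2 * y) + y := by push_cast; ring
      rw [h1, Real.exp_add, Real.exp_nat_mul, div_pow]
      have hj : (j.factorial : ℝ) ≠ 0 := by exact_mod_cast j.factorial_ne_zero
      field_simp
    rwa [key] at h
  have habs : Summable fun p : ℕ × ℕ => ‖g p‖ := by
    have hnorm : (fun p : ℕ × ℕ => ‖g p‖)
        = fun p : ℕ × ℕ =>
            (((2 * p.1 + 1 : ℕ) : ℝ) * |x|) ^ p.2 / (2 ^ p.1 * p.1.factorial * p.2.factorial) := by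
      funext p
      rw [hg]
      simp only [Real.norm_eq_abs, abs_div, abs_pow, abs_mul, abs_two, Nat.abs_cast]
    rw [hnorm]
    refine (summable_prod_of_nonneg fun p => by positivity).2 ⟨fun j => (fib |x| j).summable, ?_⟩
    have heq : (fun j : ℕ => ∑' n : ℕ,
          (((2 * j + 1 : ℕ) : ℝ) * |x|) ^ n / (2 ^ j * j.factorial * n.factorial))
        = fun j : ℕ => Real.exp (((2 * j + 1 : ℕ) : ℝ) * |x|) / (2 ^ j * j.factorial) :=
      funext fun j => (fib |x| j).tsum_eq
    rw [heq]
    exact (expcol |x|).summable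
  have hg_sum : Summable g := habs.of_norm
  have h1 : HasSum (fun j : ℕ => Real.exp (((2 * j + 1 : ℕ) : ℝ) * x) / (2 ^ j * j.factorial))
      (∑' p, g p) :=
    hg_sum.hasSum.prod_fiberwise fun j => fib x j
  have htot : (∑' p, g p) = Real.exp x * Real.exp (Real.exp (2 * x) / 2) :=
    h1.unique (expcol x)
  have fib2 : ∀ n : ℕ, HasSum (fun j : ℕ => g (j, n))
      ((Real.exp (1 / 2) * (bellB n : ℝ)) * (x ^ n / n.factorial)) := by
    intro n
    have h := (hasSum_row n).mul_right (x ^ n / (n.factorial : ℝ))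
    have key : (fun j : ℕ => ((2 * j + 1 : ℕ) : ℝ) ^ n / (2 ^ j * j.factorial) * (x ^ n / n.factorial))
        = fun j : ℕ => g (j, n) := by
      funext j
      rw [hg]
      simp only
      rw [mul_pow]
      ring
    rwa [key] at h
  have h2 : HasSum (fun n : ℕ => (Real.exp (1 / 2) * (bellB n : ℝ)) * (x ^ n / n.factorial))
      (∑' q : ℕ × ℕ, g q.swap) :=
    hg_sum.prod_symm.hasSum.prod_fiberwise fun n => fib2 n
  have hswap_tsum : (∑' q : ℕ × ℕ, g q.swap) = ∑' p, g p := (Equiv.prodComm ℕ ℕ).tsum_eq g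
  have h3 := h2.div_const (Real.exp (1 / 2))
  have key : (fun n : ℕ =>
        (Real.exp (1 / 2) * (bellB n : ℝ)) * (x ^ n / n.factorial) / Real.exp (1 / 2))
      = fun n : ℕ => (bellB n : ℝ) * x ^ n / n.factorial := by
    funext n
    have hE : Real.exp (1 / 2) ≠ 0 := Real.exp_ne_zero _
    field_simp
  rw [key, hswap_tsum, htot] at h3
  have hval : Real.exp x * Real.exp (Real.exp (2 * x) / 2) / Real.exp (1 / 2)
      = Real.exp (Real.exp (2 * x) / 2 + x - 1 / 2) := by
    rw [← Real.exp_add, ← Real.exp_sub]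
    ring_nf
  rw [hval] at h3
  exact ⟨h3.summable, h3.tsum_eq⟩
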